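/- (Strong clustering of the mean output state.) Fix l₀, m ≥ 1 and a density matrix ρ̄ on H^{⊗l₀}. Then for all operators A, B ∈ B(K^{⊗m l₀}), lim_{k→∞} Tr[ Φ^{((2m+k) l₀)}(ρ̄^{⊗(2m+k)}) (A ⊗ 1_{K^{⊗k l₀}} ⊗ B) ] = Tr[Φ^{(m l₀)}(ρ̄^{⊗m}) A] · Tr[Φ^{(m l₀)}(ρ̄^{⊗m}) B]. -/

import Mathlib

open Matrix Filter
open scoped BigOperators ComplexOrder

noncomputable section

/-- Operators on the `n`-fold tensor power of a `d`-dimensional Hilbert space. -/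
abbrev MatPow (d n : ℕ) := Matrix (Fin n → Fin d) (Fin n → Fin d) ℂ

/-- A density matrix: positive semidefinite with unit trace. -/
def IsDensity {m : Type*} [Fintype m] (ρ : Matrix m m ℂ) : Prop :=
  ρ.PosSemidef ∧ ρ.trace = 1

/-- Loewner order `A ≤ B`. -/
def Loewner {m : Type*} [Fintype m] (A B : Matrix m m ℂ) : Prop := (B - A).PosSemidef

/-- An orthogonal projection. -/
def IsProjection {m : Type*} [Fintype m] (P : Matrix m m ℂ) : Prop :=
  P.IsHermitian ∧ P * P = P

/-- Positive semidefinite square root (zero on non-PSD input). -/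
def psqrt {m : Type*} [Fintype m] [DecidableEq m] (A : Matrix m m ℂ) : Matrix m m ℂ :=
  letI := Classical.propDecidable A.PosSemidef
  if h : A.PosSemidef then
    (h.1.eigenvectorUnitary : Matrix m m ℂ) * diagonal ((↑) ∘ Real.sqrt ∘ h.1.eigenvalues) *
      (star h.1.eigenvectorUnitary : Matrix m m ℂ)
  else 0

/-- Fidelity `F(A,B) = Tr √(√A B √A)` of positive semidefinite operators. -/
def fidelity {m : Type*} [Fintype m] [DecidableEq m] (A B : Matrix m m ℂ) : ℝ :=
  ((psqrt (psqrt A * B * psqrt A)).trace).re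

/-- The trace norm `Tr |A| = Tr √(Aᴴ A)`. -/
def traceNorm {m : Type*} [Fintype m] [DecidableEq m] (A : Matrix m m ℂ) : ℝ :=
  ((psqrt (Aᴴ * A)).trace).re

/-- Von Neumann entropy `S(ρ) = -Tr(ρ log₂ ρ)` (via eigenvalues, base-2 logarithm). -/
def vnEntropy {m : Type*} [Fintype m] [DecidableEq m] (ρ : Matrix m m ℂ) : ℝ :=
  if h : ρ.IsHermitian then -∑ i, h.eigenvalues i * Real.logb 2 (h.eigenvalues i) else 0

/-- Linear maps from operators on an `a`-dimensional space to operators on a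
`b`-dimensional space. -/
abbrev QChannelMap (a b : ℕ) := Matrix (Fin a) (Fin a) ℂ →ₗ[ℂ] Matrix (Fin b) (Fin b) ℂ

/-- The Choi matrix of a linear map. -/
def choiMatrix {a b : ℕ} (Φ : QChannelMap a b) : Matrix (Fin a × Fin b) (Fin a × Fin b) ℂ :=
  Matrix.of fun p p' => Φ (Matrix.single p.1 p'.1 1) p.2 p'.2

/-- Completely positive (positive semidefinite Choi matrix) and trace preserving. -/
def IsCPTP {a b : ℕ} (Φ : QChannelMap a b) : Prop :=
  (choiMatrix Φ).PosSemidef ∧ ∀ ρ : Matrix (Fin a) (Fin a) ℂ, (Φ ρ).trace = ρ.trace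

/-- The `n`-fold tensor product map `Φs 0 ⊗ ⋯ ⊗ Φs (n-1)`. -/
def tensChan {a b : ℕ} (n : ℕ) (Φs : Fin n → QChannelMap a b) (ρ : MatPow a n) :
    MatPow b n :=
  Matrix.of fun y y' => ∑ x : Fin n → Fin a, ∑ x' : Fin n → Fin a,
    ρ x x' * ∏ k, Φs k (Matrix.single (x k) (x' k) 1) (y k) (y' k)

/-- The Markov weight `γ_{i₁} q_{i₁ i₂} ⋯ q_{i_{n-1} i_n}` of a trajectory. -/
def chainWt {I : Type*} (q : I → I → ℝ) (γ : I → ℝ) {n : ℕ} (i : Fin n → I) : ℝ :=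
  ∏ k : Fin n, if k.val = 0 then γ (i k)
    else q (i ⟨k.val - 1, Nat.lt_of_le_of_lt (Nat.pred_le _) k.isLt⟩) (i k)

/-- The memory channel `Φ^{(n)}` with Markovian correlated noise. -/
def memChan {I : Type*} [Fintype I] {a b : ℕ} (q : I → I → ℝ) (γ : I → ℝ)
    (Φ : I → QChannelMap a b) (n : ℕ) (ρ : MatPow a n) : MatPow b n :=
  ∑ i : Fin n → I, chainWt q γ i • tensChan n (fun k => Φ (i k)) ρ

/-- `γ_C = ∑_{i ∈ C} γ_i`. -/
def gammaC {I : Type*} [Fintype I] [DecidableEq I] (γ : I → ℝ) (C : Finset I) : ℝ :=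
  ∑ i ∈ C, γ i

/-- The channel `Φ_C^{(n)}` restricted to the class `C`. -/
def classChan {I : Type*} [Fintype I] [DecidableEq I] {a b : ℕ} (q : I → I → ℝ)
    (γ : I → ℝ) (Φ : I → QChannelMap a b) (C : Finset I) (n : ℕ) (ρ : MatPow a n) :
    MatPow b n :=
  (gammaC γ C)⁻¹ • ∑ i : Fin n → {x // x ∈ C},
    chainWt q γ (fun k => (i k : I)) • tensChan n (fun k => Φ (i k : I)) ρ

/-- The transition matrix of the Markov chain. -/
def qMatrix {I : Type*} [Fintype I] (q : I → I → ℝ) : Matrix I I ℝ := Matrix.of q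

/-- `j` is accessible from `i`. -/
def Accessible {I : Type*} [Fintype I] [DecidableEq I] (q : I → I → ℝ) (i j : I) : Prop :=
  ∃ n : ℕ, 0 < (qMatrix q ^ n) i j

/-- `i` and `j` communicate. -/
def Communicates {I : Type*} [Fintype I] [DecidableEq I] (q : I → I → ℝ) (i j : I) : Prop :=
  Accessible q i j ∧ Accessible q j i

/-- `C` is a communicating class. -/
def IsCommClass {I : Type*} [Fintype I] [DecidableEq I] (q : I → I → ℝ) (C : Finset I) :
    Prop :=
  ∃ i : I, ∀ j, j ∈ C ↔ Communicates q i j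

/-- The class `C` is aperiodic: for each of its states, the gcd of the return
times is `1`. -/
def IsAperiodicClass {I : Type*} [Fintype I] [DecidableEq I] (q : I → I → ℝ)
    (C : Finset I) : Prop :=
  ∀ i ∈ C, ∀ d : ℕ, (∀ n : ℕ, 0 < n → 0 < (qMatrix q ^ n) i i → d ∣ n) → d = 1

/-- The class `C` is a (deterministic) periodic cycle `i₀ → i₁ → ⋯ → i_{L-1} → i₀` of
period `L ≥ 2`, enumerated by the `L`-periodic function `e : ℕ → I`. -/
def IsPeriodicCycle {I : Type*} [Fintype I] [DecidableEq I] (q : I → I → ℝ)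
    (C : Finset I) (L : ℕ) (e : ℕ → I) : Prop :=
  2 ≤ L ∧ (∀ k, e (k + L) = e k) ∧ (∀ j, j ∈ C ↔ ∃ k < L, e k = j) ∧
    (∀ k k', k < L → k' < L → e k = e k' → k = k') ∧ ∀ k, q (e k) (e (k + 1)) = 1

/-- The branch channel `Φ_{C,i_k}^{(n)} = Φ_{i_k} ⊗ Φ_{i_{k+1}} ⊗ ⋯ ⊗ Φ_{i_{k+n-1}}`
of a periodic cycle enumerated by `e`, started at position `k`. -/
def cycleChan {I : Type*} {a b : ℕ} (Φ : I → QChannelMap a b) (e : ℕ → I) (k n : ℕ)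
    (ρ : MatPow a n) : MatPow b n :=
  tensChan n (fun r => Φ (e (k + r.val))) ρ

/-- A finite ensemble of density matrices. -/
def IsEnsemble {m : Type*} [Fintype m] {J : ℕ} (p : Fin J → ℝ)
    (ρ : Fin J → Matrix m m ℂ) : Prop :=
  (∀ j, 0 ≤ p j) ∧ ∑ j, p j = 1 ∧ ∀ j, IsDensity (ρ j)

/-- Mean Holevo quantity of an ensemble for an aperiodic class `C`. -/
def holevoAper {I : Type*} [Fintype I] [DecidableEq I] {a b : ℕ} (q : I → I → ℝ)
    (γ : I → ℝ) (Φ : I → QChannelMap a b) (C : Finset I) (n : ℕ) {J : ℕ}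
    (p : Fin J → ℝ) (ρ : Fin J → MatPow a n) : ℝ :=
  (1 / (n : ℝ)) * (vnEntropy (∑ j, p j • classChan q γ Φ C n (ρ j)) -
    ∑ j, p j * vnEntropy (classChan q γ Φ C n (ρ j)))

/-- Mean Holevo quantity of an ensemble for a periodic cycle of period `L`
enumerated by `e`. -/
def holevoCyc {I : Type*} {a b : ℕ} (Φ : I → QChannelMap a b) (e : ℕ → I) (L n : ℕ)
    {J : ℕ} (p : Fin J → ℝ) (ρ : Fin J → MatPow a n) : ℝ :=
  (1 / ((n : ℝ) * L)) * ∑ k : Fin L,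
    (vnEntropy (cycleChan Φ e k.val n (∑ j, p j • ρ j)) -
      ∑ j, p j * vnEntropy (cycleChan Φ e k.val n (ρ j)))

/-- The mean Holevo quantity `χ̄_C^{(n)}` of a communicating class. -/
def chibarC {I : Type*} [Fintype I] [DecidableEq I] {a b : ℕ} (q : I → I → ℝ)
    (γ : I → ℝ) (Φ : I → QChannelMap a b) (C : Finset I) (n : ℕ) {J : ℕ}
    (p : Fin J → ℝ) (ρ : Fin J → MatPow a n) : ℝ :=
  letI := Classical.propDecidable (∃ L e, IsPeriodicCycle q C L e)
  if h : ∃ L e, IsPeriodicCycle q C L e then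
    holevoCyc Φ h.choose_spec.choose h.choose n p ρ
  else holevoAper q γ Φ C n p ρ

/-- `χ̄_n`: the supremum over ensembles of the minimum over communicating classes
(of positive weight) of the mean Holevo quantities. -/
def chibar {I : Type*} [Fintype I] [DecidableEq I] {a b : ℕ} (q : I → I → ℝ)
    (γ : I → ℝ) (Φ : I → QChannelMap a b) (n : ℕ) : ℝ :=
  sSup {x : ℝ | ∃ (J : ℕ) (p : Fin J → ℝ) (ρ : Fin J → MatPow a n),
    IsEnsemble p ρ ∧
    x = sInf {y : ℝ | ∃ C : Finset I, IsCommClass q C ∧ 0 < gammaC γ C ∧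
      y = chibarC q γ Φ C n p ρ}}

/-- The `n`-use Holevo quantity of the memory channel. -/
def chiN {I : Type*} [Fintype I] {a b : ℕ} (q : I → I → ℝ) (γ : I → ℝ)
    (Φ : I → QChannelMap a b) (n : ℕ) : ℝ :=
  sSup {x : ℝ | ∃ (J : ℕ) (p : Fin J → ℝ) (ρ : Fin J → MatPow a n),
    IsEnsemble p ρ ∧
    x = (1 / (n : ℝ)) * (vnEntropy (∑ j, p j • memChan q γ Φ n (ρ j)) -
      ∑ j, p j * vnEntropy (memChan q γ Φ n (ρ j)))}

/-- A code: densities as codewords and a sub-POVM as decoder. -/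
def IsCode {a b : ℕ} (n N : ℕ) (ρ : Fin N → MatPow a n) (E : Fin N → MatPow b n) : Prop :=
  (∀ k, IsDensity (ρ k)) ∧ (∀ k, (E k).PosSemidef) ∧ Loewner (∑ k, E k) 1

/-- Average probability of error of a code for the memory channel. -/
def avgErr {I : Type*} [Fintype I] {a b : ℕ} (q : I → I → ℝ) (γ : I → ℝ)
    (Φ : I → QChannelMap a b) (n N : ℕ) (ρ : Fin N → MatPow a n)
    (E : Fin N → MatPow b n) : ℝ :=
  (1 / (N : ℝ)) * ∑ k, (1 - ((memChan q γ Φ n (ρ k) * E k).trace).re)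

/-- `R` is an achievable rate for the memory channel. -/
def AchievableRate {I : Type*} [Fintype I] {a b : ℕ} (q : I → I → ℝ) (γ : I → ℝ)
    (Φ : I → QChannelMap a b) (R : ℝ) : Prop :=
  0 ≤ R ∧ ∃ (N : ℕ → ℕ) (ρ : ∀ n, Fin (N n) → MatPow a n)
    (E : ∀ n, Fin (N n) → MatPow b n),
    (∀ n, IsCode n (N n) (ρ n) (E n)) ∧
    (∀ n : ℕ, (2 : ℝ) ^ ((n : ℝ) * R) ≤ (N n : ℝ)) ∧
    Tendsto (fun n => avgErr q γ Φ n (N n) (ρ n) (E n)) atTop (nhds 0)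

/-- The classical capacity: the supremum of achievable rates. -/
def capacity {I : Type*} [Fintype I] {a b : ℕ} (q : I → I → ℝ) (γ : I → ℝ)
    (Φ : I → QChannelMap a b) : ℝ :=
  sSup {R : ℝ | AchievableRate q γ Φ R}

/-- A stochastic matrix. -/
def IsStochastic {I : Type*} [Fintype I] (q : I → I → ℝ) : Prop :=
  (∀ i j, 0 ≤ q i j) ∧ ∀ i, ∑ j, q i j = 1

/-- An invariant probability distribution. -/
def IsInvariantDist {I : Type*} [Fintype I] (q : I → I → ℝ) (γ : I → ℝ) : Prop :=
  (∀ i, 0 ≤ γ i) ∧ ∑ i, γ i = 1 ∧ ∀ j, γ j = ∑ i, γ i * q i j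

/-- The chain is irreducible. -/
def IsIrreducibleChain {I : Type*} [Fintype I] [DecidableEq I] (q : I → I → ℝ) : Prop :=
  ∀ i j, Accessible q i j

/-- The chain is aperiodic. -/
def IsAperiodicChain {I : Type*} [Fintype I] [DecidableEq I] (q : I → I → ℝ) : Prop :=
  ∀ i : I, ∀ d : ℕ, (∀ n : ℕ, 0 < n → 0 < (qMatrix q ^ n) i i → d ∣ n) → d = 1

/-- The index of the `s`-th site of the `r`-th block. -/
def blockIdx {m l : ℕ} (r : Fin m) (s : Fin l) : Fin (m * l) :=
  ⟨r.val * l + s.val, by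
    have h1 := r.isLt
    have h2 := s.isLt
    calc r.val * l + s.val < r.val * l + l := Nat.add_lt_add_left h2 _
      _ = (r.val + 1) * l := by ring
      _ ≤ m * l := Nat.mul_le_mul_right _ h1⟩

/-- The tensor product `ρ 0 ⊗ ρ 1 ⊗ ⋯ ⊗ ρ (m-1)` of `m` states on `l` sites each. -/
def kronFam {d l : ℕ} {m : ℕ} (ρ : Fin m → MatPow d l) : MatPow d (m * l) :=
  Matrix.of fun x x' =>
    ∏ r : Fin m, ρ r (fun s => x (blockIdx r s)) (fun s => x' (blockIdx r s))

/-- The `m`-fold tensor power `ρ^{⊗ m}` of a state on `l` sites. -/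
def kronPow {d l : ℕ} (m : ℕ) (ρ : MatPow d l) : MatPow d (m * l) := kronFam fun _ => ρ

/-- The tensor product `τ 0 ⊗ ⋯ ⊗ τ (n-1)` of single-site states. -/
def kronSites {d n : ℕ} (τ : Fin n → Matrix (Fin d) (Fin d) ℂ) : MatPow d n :=
  Matrix.of fun x x' => ∏ r, τ r (x r) (x' r)

/-- The tensor product of a state on `a` sites and a state on `b` sites. -/
def kron2 {d a b : ℕ} (A : MatPow d a) (B : MatPow d b) : MatPow d (a + b) :=
  Matrix.of fun x x' =>
    A (fun s => x (Fin.castAdd b s)) (fun s => x' (Fin.castAdd b s)) *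
      B (fun t => x (Fin.natAdd a t)) (fun t => x' (Fin.natAdd a t))

/-- `A ⊗ 1 ⊗ B` on `(2m+k)·l` sites, where `A`, `B` act on the first and last `m·l`
sites respectively and the identity acts on the middle `k·l` sites. -/
def threeBlock {d : ℕ} (m k l : ℕ) (A B : MatPow d (m * l)) : MatPow d ((2 * m + k) * l) :=
  Matrix.of fun y y' =>
    A (fun s => y ⟨s.val, by
          have hs := s.isLt
          have h : m * l ≤ (2 * m + k) * l := Nat.mul_le_mul_right _ (by omega)
          omega⟩)
      (fun s => y' ⟨s.val, by
          have hs := s.isLt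
          have h : m * l ≤ (2 * m + k) * l := Nat.mul_le_mul_right _ (by omega)
          omega⟩) *
    (if (fun t : Fin (k * l) => y ⟨m * l + t.val, by
            have ht := t.isLt
            have h : (m + k) * l ≤ (2 * m + k) * l := Nat.mul_le_mul_right _ (by omega)
            have e : (m + k) * l = m * l + k * l := Nat.add_mul _ _ _
            omega⟩) =
        (fun t : Fin (k * l) => y' ⟨m * l + t.val, by
            have ht := t.isLt
            have h : (m + k) * l ≤ (2 * m + k) * l := Nat.mul_le_mul_right _ (by omega)
            have e : (m + k) * l = m * l + k * l := Nat.add_mul _ _ _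
            omega⟩)
      then (1 : ℂ) else 0) *
    B (fun s => y ⟨(m + k) * l + s.val, by
          have hs := s.isLt
          have e : (2 * m + k) * l = (m + k) * l + m * l := by
            rw [show 2 * m + k = (m + k) + m by omega, Nat.add_mul]
          omega⟩)
      (fun s => y' ⟨(m + k) * l + s.val, by
          have hs := s.isLt
          have e : (2 * m + k) * l = (m + k) * l + m * l := by
            rw [show 2 * m + k = (m + k) + m by omega, Nat.add_mul]
          omega⟩)

/-!
For each noise trajectory the trace against `A ⊗ 1 ⊗ B` factorises over the three blocks of
sites, and the middle factor is `1` because the channels are trace preserving and `ρ̄` has unit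
trace. By the Markov property, summing out the trajectory on the middle block leaves the
`k l₀`-step transition probability `(q^{k l₀})ᵢⱼ` from the last state `i` of the first block as the
only coupling between the outer blocks. An irreducible aperiodic chain is primitive, so Doeblin's
contraction gives `(q^{k l₀})ᵢⱼ → γⱼ`; since `γ q = γ`, the last block then sees the noise started
from `γ` again, and the limit is the product of the two single-block expectations.
-/

open Topology Finset

section StochasticMatrix

variable {I : Type*} [Fintype I] {P : Matrix I I ℝ}

lemma sum_abs_vecMul_le (hP : ∀ i, ∑ j, P i j = 1) {c : ℝ} (hc : ∀ i j, c ≤ P i j)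
    {v : I → ℝ} (hv : ∑ i, v i = 0) :
    ∑ j, |(v ᵥ* P) j| ≤ (1 - Fintype.card I * c) * ∑ i, |v i| := by
  have hshift : ∀ j, (v ᵥ* P) j = ∑ i, v i * (P i j - c) := by
    intro j
    simp only [vecMul, dotProduct, mul_sub, sum_sub_distrib, ← sum_mul, hv, zero_mul, sub_zero]
  calc ∑ j, |(v ᵥ* P) j| ≤ ∑ j, ∑ i, |v i| * (P i j - c) := by
        refine sum_le_sum fun j _ => ?_
        rw [hshift]
        refine (abs_sum_le_sum_abs _ _).trans (le_of_eq (sum_congr rfl fun i _ => ?_))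
        rw [abs_mul, abs_of_nonneg (sub_nonneg.2 (hc i j))]
    _ = ∑ i, |v i| * (1 - Fintype.card I * c) := by
        rw [sum_comm]
        simp only [← mul_sum, sum_sub_distrib, hP, sum_const, card_univ, nsmul_eq_mul]
    _ = (1 - Fintype.card I * c) * ∑ i, |v i| := by rw [← sum_mul, mul_comm]

variable [DecidableEq I]

lemma pow_apply_mul_pow_apply_le (hP : P ∈ rowStochastic ℝ I) (a b : ℕ) (i k j : I) :
    (P ^ a) i k * (P ^ b) k j ≤ (P ^ (a + b)) i j := by
  rw [pow_add, mul_apply]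
  exact single_le_sum (fun t _ => mul_nonneg ((pow_mem hP a).1 i t) ((pow_mem hP b).1 t j))
    (mem_univ k)

/-- The return times to `i` form an additive submonoid of `ℕ` with gcd `1`, so they contain all
large enough integers. -/
lemma eventually_pos_pow_apply_self (hP : P ∈ rowStochastic ℝ I) (i : I)
    (hi : ∀ d : ℕ, (∀ n : ℕ, 0 < n → 0 < (P ^ n) i i → d ∣ n) → d = 1) :
    ∀ᶠ n in atTop, 0 < (P ^ n) i i := by
  let S : AddSubmonoid ℕ :=
    { carrier := {n | 0 < (P ^ n) i i}
      zero_mem' := by simp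
      add_mem' := fun {a b} ha hb =>
        (mul_pos ha hb).trans_le (pow_apply_mul_pow_apply_le hP a b i i i) }
  have hgcd : Nat.setGcd S = 1 :=
    hi _ fun n _ hn => Nat.setGcd_dvd_of_mem (s := (S : Set ℕ)) hn
  obtain ⟨N, hN⟩ := Nat.exists_mem_closure_of_ge (S : Set ℕ)
  refine eventually_atTop.2 ⟨N, fun n hn => ?_⟩
  have := hN n hn (by rw [hgcd]; exact one_dvd n)
  rwa [AddSubmonoid.closure_eq] at this

lemma eventually_forall_pos_pow_apply (hP : P ∈ rowStochastic ℝ I)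
    (hirr : ∀ i j, ∃ n, 0 < (P ^ n) i j)
    (haper : ∀ i : I, ∀ d : ℕ, (∀ n : ℕ, 0 < n → 0 < (P ^ n) i i → d ∣ n) → d = 1) :
    ∀ᶠ n in atTop, ∀ i j, 0 < (P ^ n) i j := by
  refine eventually_all.2 fun i => eventually_all.2 fun j => ?_
  obtain ⟨n₀, hn₀⟩ := hirr i j
  filter_upwards [(tendsto_sub_atTop_nat n₀).eventually
    (eventually_pos_pow_apply_self hP i (haper i)), eventually_ge_atTop n₀] with n hn hle
  calc 0 < (P ^ (n - n₀)) i i * (P ^ n₀) i j := mul_pos hn hn₀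
    _ ≤ (P ^ (n - n₀ + n₀)) i j := pow_apply_mul_pow_apply_le hP _ _ i i j
    _ = (P ^ n) i j := by rw [Nat.sub_add_cancel hle]

lemma vecMul_pow_eq_self {γ : I → ℝ} (hγP : γ ᵥ* P = γ) (n : ℕ) : γ ᵥ* P ^ n = γ := by
  induction n with
  | zero => simp
  | succ n ih => rw [pow_succ, ← vecMul_vecMul, ih, hγP]

lemma sum_abs_pow_apply_sub_le (hP : P ∈ rowStochastic ℝ I) {γ : I → ℝ} (hγ : ∑ i, γ i = 1)
    (hγP : γ ᵥ* P = γ) {N : ℕ} {r : ℝ} (hr : 0 ≤ r)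
    (hcontr : ∀ v : I → ℝ, ∑ i, v i = 0 → ∑ j, |(v ᵥ* P ^ N) j| ≤ r * ∑ i, |v i|)
    (a : I) (n : ℕ) :
    ∑ j, |(P ^ n) a j - γ j| ≤ r ^ (n / N) * (1 + ∑ j, |γ j|) := by
  set D : ℕ → ℝ := fun n => ∑ j, |(P ^ n) a j - γ j|
  have hrow : ∀ n i, ∑ j, (P ^ n) i j = 1 := fun n => sum_row_of_mem_rowStochastic (pow_mem hP n)
  have hstep : ∀ n, D (n + N) ≤ r * D n := by
    intro n
    have hv : ∑ j, ((P ^ n) a j - γ j) = 0 := by rw [sum_sub_distrib, hrow, hγ, sub_self]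
    convert hcontr _ hv using 3 with j
    rw [show (fun i => (P ^ n) a i - γ i) = (P ^ n) a - γ from rfl, sub_vecMul,
      vecMul_pow_eq_self hγP, pow_add]
    rfl
  have hiter : ∀ s t, D (s + t * N) ≤ r ^ t * D s := by
    intro s t
    induction t with
    | zero => simp
    | succ t ih =>
      calc D (s + (t + 1) * N) = D (s + t * N + N) := by ring_nf
        _ ≤ r * (r ^ t * D s) := (hstep _).trans (mul_le_mul_of_nonneg_left ih hr)
        _ = r ^ (t + 1) * D s := by ring
  have hbdd : ∀ n, D n ≤ 1 + ∑ j, |γ j| := by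
    intro n
    calc D n ≤ ∑ j, (|(P ^ n) a j| + |γ j|) := sum_le_sum fun j _ => abs_sub _ _
      _ = 1 + ∑ j, |γ j| := by
        rw [sum_add_distrib]
        simp_rw [abs_of_nonneg ((pow_mem hP n).1 a _), hrow]
  calc D n = D (n % N + n / N * N) := by rw [Nat.mod_add_div']
    _ ≤ r ^ (n / N) * D (n % N) := hiter _ _
    _ ≤ r ^ (n / N) * (1 + ∑ j, |γ j|) := mul_le_mul_of_nonneg_left (hbdd _) (pow_nonneg hr _)

theorem tendsto_pow_apply (hP : P ∈ rowStochastic ℝ I)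
    (hprim : ∀ᶠ n in atTop, ∀ i j, 0 < (P ^ n) i j) {γ : I → ℝ} (hγ : ∑ i, γ i = 1)
    (hγP : γ ᵥ* P = γ) (a b : I) :
    Tendsto (fun n => (P ^ n) a b) atTop (𝓝 (γ b)) := by
  obtain ⟨N, hN, hpos⟩ := ((eventually_gt_atTop 0).and hprim).exists
  have : Nonempty I := by
    by_contra h
    simp [not_nonempty_iff.1 h] at hγ
  obtain ⟨c, hc0, hc⟩ : ∃ c > 0, ∀ i j, c ≤ (P ^ N) i j := by
    obtain ⟨p, -, hp⟩ := exists_min_image univ (fun p : I × I => (P ^ N) p.1 p.2)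
      univ_nonempty
    exact ⟨_, hpos p.1 p.2, fun i j => hp (i, j) (mem_univ _)⟩
  have hrowN : ∀ i, ∑ j, (P ^ N) i j = 1 := sum_row_of_mem_rowStochastic (pow_mem hP N)
  set r := 1 - Fintype.card I * c
  have hr0 : 0 ≤ r := by
    have := sum_le_sum fun j (_ : j ∈ univ) => hc (Classical.arbitrary I) j
    rw [sum_const, card_univ, nsmul_eq_mul, hrowN] at this
    linarith
  have hr1 : r < 1 := by
    have : (0 : ℝ) < Fintype.card I := Nat.cast_pos.2 Fintype.card_pos
    linarith [mul_pos this hc0]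
  have hbound : ∀ n, |(P ^ n) a b - γ b| ≤ r ^ (n / N) * (1 + ∑ j, |γ j|) := fun n =>
    (single_le_sum (f := fun j => |(P ^ n) a j - γ j|) (fun j _ => abs_nonneg _) (mem_univ b)).trans
      (sum_abs_pow_apply_sub_le hP hγ hγP hr0 (fun v hv => sum_abs_vecMul_le hrowN hc hv) a n)
  have hgeo : Tendsto (fun n => r ^ (n / N) * (1 + ∑ j, |γ j|)) atTop (𝓝 0) := by
    simpa using ((tendsto_pow_atTop_nhds_zero_of_lt_one hr0 hr1).comp
      (Nat.tendsto_div_const_atTop hN.ne')).mul_const (1 + ∑ j, |γ j|)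
  exact tendsto_iff_norm_sub_tendsto_zero.2 (squeeze_zero (fun n => norm_nonneg _) hbound hgeo)

end StochasticMatrix

section Sites

variable {α : Type*} {a b n : ℕ}

def appendSplit (h : a + b = n) : Fin a ⊕ Fin b ≃ Fin n := finSumFinEquiv.trans (finCongr h)

def splitSites (σ : Fin a ⊕ Fin b ≃ Fin n) : (Fin n → α) ≃ (Fin a → α) × (Fin b → α) :=
  (σ.arrowCongr (Equiv.refl α)).symm.trans (Equiv.sumArrowEquivProdArrow _ _ _)

@[simp]
lemma splitSites_symm_apply_inl (σ : Fin a ⊕ Fin b ≃ Fin n) (u : Fin a → α) (v : Fin b → α)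
    (s : Fin a) : (splitSites σ).symm (u, v) (σ (.inl s)) = u s := by
  simp [splitSites]

@[simp]
lemma splitSites_symm_apply_inr (σ : Fin a ⊕ Fin b ≃ Fin n) (u : Fin a → α) (v : Fin b → α)
    (s : Fin b) : (splitSites σ).symm (u, v) (σ (.inr s)) = v s := by
  simp [splitSites]

lemma splitSites_appendSplit_symm (u : Fin a → α) (v : Fin b → α) :
    (splitSites (appendSplit rfl)).symm (u, v) = Fin.append u v := by
  ext t
  refine Fin.addCases (fun s => ?_) (fun s => ?_) t
  · rw [Fin.append_left]
    exact splitSites_symm_apply_inl (appendSplit rfl) u v s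
  · rw [Fin.append_right]
    exact splitSites_symm_apply_inr (appendSplit rfl) u v s

end Sites

open scoped Kronecker

section TensorProduct

variable {d dH dK a b n : ℕ}

def kronSplit (σ : Fin a ⊕ Fin b ≃ Fin n) (M₁ : MatPow d a) (M₂ : MatPow d b) : MatPow d n :=
  (M₁ ⊗ₖ M₂).submatrix (splitSites σ) (splitSites σ)

lemma kronSplit_apply (σ : Fin a ⊕ Fin b ≃ Fin n) (M₁ : MatPow d a) (M₂ : MatPow d b)
    (x x' : Fin n → Fin d) :
    kronSplit σ M₁ M₂ x x' = M₁ (fun s => x (σ (.inl s))) (fun s => x' (σ (.inl s))) *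
      M₂ (fun s => x (σ (.inr s))) (fun s => x' (σ (.inr s))) :=
  rfl

lemma kronSplit_mul_kronSplit (σ : Fin a ⊕ Fin b ≃ Fin n) (M₁ N₁ : MatPow d a)
    (M₂ N₂ : MatPow d b) :
    kronSplit σ M₁ M₂ * kronSplit σ N₁ N₂ = kronSplit σ (M₁ * N₁) (M₂ * N₂) := by
  simp only [kronSplit, submatrix_mul_equiv, mul_kronecker_mul]

lemma trace_kronSplit (σ : Fin a ⊕ Fin b ≃ Fin n) (M₁ : MatPow d a) (M₂ : MatPow d b) :
    (kronSplit σ M₁ M₂).trace = M₁.trace * M₂.trace := by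
  rw [← trace_kronecker]
  exact (splitSites σ).sum_comp fun x => (M₁ ⊗ₖ M₂) x x

lemma tensChan_kronSplit (σ : Fin a ⊕ Fin b ≃ Fin n) (Φs : Fin n → QChannelMap dH dK)
    (ρ₁ : MatPow dH a) (ρ₂ : MatPow dH b) :
    tensChan n Φs (kronSplit σ ρ₁ ρ₂) =
      kronSplit σ (tensChan a (fun s => Φs (σ (.inl s))) ρ₁)
        (tensChan b (fun s => Φs (σ (.inr s))) ρ₂) := by
  ext y y'
  simp only [tensChan, kronSplit_apply, of_apply]
  simp_rw [← (splitSites σ).symm.sum_comp (fun x => ∑ x', _),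
    ← (splitSites σ).symm.sum_comp (fun x' => _), ← σ.prod_comp, Fintype.prod_sum_type]
  simp only [Fintype.sum_prod_type, splitSites_symm_apply_inl, splitSites_symm_apply_inr,
    sum_mul_sum]
  congr! 4
  exact mul_mul_mul_comm _ _ _ _

lemma trace_single_one {ι : Type*} [Fintype ι] [DecidableEq ι] (i j : ι) :
    (single i j (1 : ℂ)).trace = if i = j then 1 else 0 := by
  split_ifs with h <;> simp [h]

lemma trace_tensChan {Φs : Fin n → QChannelMap dH dK}
    (hΦs : ∀ t (ρ : Matrix (Fin dH) (Fin dH) ℂ), (Φs t ρ).trace = ρ.trace) (ρ : MatPow dH n) :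
    (tensChan n Φs ρ).trace = ρ.trace := by
  have hdelta : ∀ x x' : Fin n → Fin dH,
      ∑ y : Fin n → Fin dK, ∏ t, Φs t (single (x t) (x' t) 1) (y t) (y t) =
        if x = x' then 1 else 0 := by
    intro x x'
    calc ∑ y : Fin n → Fin dK, ∏ t, Φs t (single (x t) (x' t) 1) (y t) (y t)
        = ∏ t, (Φs t (single (x t) (x' t) 1)).trace :=
          (Fintype.prod_sum fun t z => Φs t (single (x t) (x' t) 1) z z).symm
      _ = if x = x' then 1 else 0 := by
          simp [hΦs, trace_single_one, Fintype.prod_boole, funext_iff]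
  calc (tensChan n Φs ρ).trace
      = ∑ x, ∑ x', ρ x x' *
          ∑ y : Fin n → Fin dK, ∏ t, Φs t (single (x t) (x' t) 1) (y t) (y t) := by
        simp only [trace, Matrix.diag, tensChan, of_apply, mul_sum]
        rw [sum_comm]
        exact sum_congr rfl fun x _ => sum_comm
    _ = ρ.trace := by simp [hdelta, trace]

end TensorProduct

section Blocks

variable {d l : ℕ}

lemma blockIdx_eq_finProdFinEquiv {m : ℕ} (r : Fin m) (s : Fin l) :
    blockIdx r s = finProdFinEquiv (r, s) :=
  Fin.ext (by simp [blockIdx, Nat.mul_comm, Nat.add_comm])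

lemma trace_kronPow (m : ℕ) (ρ : MatPow d l) : (kronPow m ρ).trace = ρ.trace ^ m := by
  let e : (Fin m → Fin l → Fin d) ≃ (Fin (m * l) → Fin d) :=
    (Equiv.curry _ _ _).symm.trans (finProdFinEquiv.arrowCongr (Equiv.refl _))
  calc (kronPow m ρ).trace = ∑ g : Fin m → Fin l → Fin d, ∏ r, ρ (g r) (g r) := by
        refine (e.sum_comp fun x => kronPow m ρ x x).symm.trans (sum_congr rfl fun g _ => ?_)
        simp [kronPow, kronFam, blockIdx_eq_finProdFinEquiv, e]
    _ = ρ.trace ^ m := by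
        rw [← Fintype.prod_sum fun (_ : Fin m) h => ρ h h, prod_const, card_univ,
          Fintype.card_fin]
        rfl

lemma kronPow_add {a b n : ℕ} (h : a + b = n) (ρ : MatPow d l) :
    kronPow n ρ =
      kronSplit (appendSplit (by rw [← h, Nat.add_mul])) (kronPow a ρ) (kronPow b ρ) := by
  subst h
  ext x x'
  simp only [kronPow, kronFam, of_apply, kronSplit_apply, Fin.prod_univ_add]
  congr! 5 <;> ext <;> simp [blockIdx, appendSplit] <;> ring

lemma threeBlock_eq_kronSplit (m k : ℕ) (A B : MatPow d (m * l)) :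
    threeBlock m k l A B =
      kronSplit (appendSplit (by ring : m * l + (k + m) * l = (2 * m + k) * l)) A
        (kronSplit (appendSplit (Nat.add_mul k m l).symm) 1 B) := by
  ext y y'
  simp only [threeBlock, of_apply, kronSplit_apply, one_apply]
  rw [mul_assoc]
  congr! 5 <;> ext <;> simp [appendSplit] <;> ring

end Blocks

section MarkovChannel

variable {I : Type*} {q : I → I → ℝ}

lemma chainWt_cons (μ : I → ℝ) {n : ℕ} (x : I) (w : Fin n → I) :
    chainWt q μ (Fin.cons x w : Fin (n + 1) → I) = μ x * chainWt q (q x) w := by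
  simp only [chainWt, Fin.prod_univ_succ, Fin.val_zero, if_true, Fin.cons_zero, Fin.val_succ,
    Nat.add_one_ne_zero, if_false, Fin.cons_succ]
  congr 1
  refine prod_congr rfl fun t _ => ?_
  split_ifs with ht
  · rw [show (⟨t + 1 - 1, by omega⟩ : Fin (n + 1)) = 0 from Fin.ext (by simp [ht]),
      Fin.cons_zero]
  · rw [show (⟨t + 1 - 1, by omega⟩ : Fin (n + 1)) = Fin.succ ⟨t - 1, by omega⟩ from
      Fin.ext (by simp; omega), Fin.cons_succ]

lemma chainWt_append (μ : I → ℝ) {p r : ℕ} (u : Fin (p + 1) → I) (v : Fin r → I) :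
    chainWt q μ (Fin.append u v) = chainWt q μ u * chainWt q (q (u (Fin.last p))) v := by
  rw [chainWt, Fin.prod_univ_add]
  congr 1
  · refine prod_congr rfl fun t _ => ?_
    simp only [Fin.val_castAdd, Fin.append_left]
    split_ifs with ht
    · rfl
    · exact congrArg (q · _) (Fin.append_left u v ⟨t - 1, by omega⟩)
  · refine prod_congr rfl fun t _ => ?_
    simp only [Fin.val_natAdd, Fin.append_right]
    rw [if_neg (by omega)]
    split_ifs with ht
    · rw [show (⟨p + 1 + t - 1, by omega⟩ : Fin (p + 1 + r)) = Fin.castAdd r (Fin.last p) from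
        Fin.ext (by simp [ht]), Fin.append_left]
    · rw [show (⟨p + 1 + t - 1, by omega⟩ : Fin (p + 1 + r)) = Fin.natAdd (p + 1) ⟨t - 1, by omega⟩
        from Fin.ext (by simp; omega), Fin.append_right]

lemma chainWt_splitSites_symm (μ : I → ℝ) {a b n : ℕ} (h : a + b = n) (ha : 0 < a)
    (u : Fin a → I) (v : Fin b → I) :
    chainWt q μ ((splitSites (appendSplit h)).symm (u, v)) =
      chainWt q μ u * chainWt q (q (u ⟨a - 1, by omega⟩)) v := by
  subst h
  obtain ⟨p, rfl⟩ := Nat.exists_eq_add_one_of_ne_zero ha.ne'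
  rw [splitSites_appendSplit_symm, chainWt_append]
  rfl

variable [Fintype I] {dH dK : ℕ} {Φ : I → QChannelMap dH dK}

lemma sum_mul_chainWt_row (ν : I → ℝ) {b : ℕ} (w : Fin (b + 1) → I) :
    ∑ j, ν j * chainWt q (q j) w = chainWt q (ν ᵥ* qMatrix q) w := by
  rw [← Fin.cons_self_tail w]
  simp only [chainWt_cons, ← mul_assoc, ← sum_mul]
  rfl

lemma trace_memChan_mul (μ : I → ℝ) {n : ℕ} (ρ : MatPow dH n) (X : MatPow dK n) :
    (memChan q μ Φ n ρ * X).trace =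
      ∑ i : Fin n → I, (chainWt q μ i : ℂ) * (tensChan n (fun t => Φ (i t)) ρ * X).trace := by
  simp only [memChan, sum_mul, trace_sum, smul_mul_assoc, trace_smul, Complex.real_smul]

lemma sum_mul_trace_memChan_row (ν : I → ℝ) {b : ℕ} (hb : 0 < b) (ρ : MatPow dH b)
    (X : MatPow dK b) :
    ∑ j, (ν j : ℂ) * (memChan q (q j) Φ b ρ * X).trace =
      (memChan q (ν ᵥ* qMatrix q) Φ b ρ * X).trace := by
  obtain ⟨b, rfl⟩ := Nat.exists_eq_add_one_of_ne_zero hb.ne'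
  simp_rw [trace_memChan_mul, mul_sum, ← sum_mul_chainWt_row ν]
  rw [sum_comm]
  push_cast
  simp_rw [sum_mul, mul_assoc]

/-- The Markov property: given the noise on the first `a` uses, the noise on the remaining uses
is the chain started from the transition row of the last of those states. -/
lemma trace_memChan_mul_kronSplit (μ : I → ℝ) {a b n : ℕ} (h : a + b = n) (ha : 0 < a)
    (ρ₁ : MatPow dH a) (ρ₂ : MatPow dH b) (X₁ : MatPow dK a) (X₂ : MatPow dK b) :
    (memChan q μ Φ n (kronSplit (appendSplit h) ρ₁ ρ₂) *
        kronSplit (appendSplit h) X₁ X₂).trace =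
      ∑ u : Fin a → I, (chainWt q μ u : ℂ) * (tensChan a (fun t => Φ (u t)) ρ₁ * X₁).trace *
        (memChan q (q (u ⟨a - 1, by omega⟩)) Φ b ρ₂ * X₂).trace := by
  simp_rw [trace_memChan_mul, tensChan_kronSplit, kronSplit_mul_kronSplit, trace_kronSplit,
    mul_sum]
  rw [← (splitSites (appendSplit h)).symm.sum_comp, Fintype.sum_prod_type]
  refine sum_congr rfl fun u _ => sum_congr rfl fun v _ => ?_
  simp only [chainWt_splitSites_symm μ h ha, splitSites_symm_apply_inl,
    splitSites_symm_apply_inr]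
  push_cast
  ring

variable [DecidableEq I]

lemma sum_chainWt_row_mul_last {K : ℕ} (hK : 0 < K) (a : I) (f : I → ℂ) :
    ∑ c : Fin K → I, (chainWt q (q a) c : ℂ) * f (c ⟨K - 1, by omega⟩) =
      ∑ j, ((qMatrix q ^ K) a j : ℂ) * f j := by
  induction K, hK using Nat.le_induction generalizing a with
  | base =>
    rw [← (Equiv.funUnique (Fin 1) I).symm.sum_comp]
    simp [chainWt, qMatrix]
  | succ K hK ih =>
    have hlast : ∀ (x : I) (c : Fin K → I),
        (Fin.cons x c : Fin (K + 1) → I) ⟨K + 1 - 1, by omega⟩ = c ⟨K - 1, by omega⟩ := by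
      intro x c
      rw [show (⟨K + 1 - 1, by omega⟩ : Fin (K + 1)) = Fin.succ ⟨K - 1, by omega⟩ from
        Fin.ext (by simp; omega), Fin.cons_succ]
    calc ∑ c : Fin (K + 1) → I, (chainWt q (q a) c : ℂ) * f (c ⟨K + 1 - 1, by omega⟩)
        = ∑ x, ∑ c : Fin K → I, (chainWt q (q a) (Fin.cons x c : Fin (K + 1) → I) : ℂ) *
            f ((Fin.cons x c : Fin (K + 1) → I) ⟨K + 1 - 1, by omega⟩) := by
          rw [← (Fin.consEquiv fun _ => I).sum_comp, Fintype.sum_prod_type]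
          rfl
      _ = ∑ x, (q a x : ℂ) * ∑ j, ((qMatrix q ^ K) x j : ℂ) * f j := by
          simp only [chainWt_cons, hlast, ← ih, mul_sum, Complex.ofReal_mul, mul_assoc]
      _ = ∑ j, ((qMatrix q ^ (K + 1)) a j : ℂ) * f j := by
          simp only [mul_sum, pow_succ', mul_apply, Complex.ofReal_sum, sum_mul,
            Complex.ofReal_mul, mul_assoc]
          rw [sum_comm]
          rfl

lemma trace_memChan_kronPow_mul_threeBlock (μ : I → ℝ)
    (hΦ : ∀ i (ρ : Matrix (Fin dH) (Fin dH) ℂ), (Φ i ρ).trace = ρ.trace)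
    {l m k : ℕ} (hl : 0 < l) (hm : 0 < m) (hk : 0 < k) {ρ : MatPow dH l} (hρ : ρ.trace = 1)
    (A B : MatPow dK (m * l)) :
    (memChan q μ Φ ((2 * m + k) * l) (kronPow (2 * m + k) ρ) * threeBlock m k l A B).trace =
      ∑ u : Fin (m * l) → I,
        (chainWt q μ u : ℂ) * (tensChan (m * l) (fun t => Φ (u t)) (kronPow m ρ) * A).trace *
          ∑ j, ((qMatrix q ^ (k * l)) (u ⟨m * l - 1, by have := Nat.mul_pos hm hl; omega⟩) j : ℂ) *
            (memChan q (q j) Φ (m * l) (kronPow m ρ) * B).trace := by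
  rw [kronPow_add (by omega : m + (k + m) = 2 * m + k), threeBlock_eq_kronSplit,
    trace_memChan_mul_kronSplit μ _ (Nat.mul_pos hm hl)]
  refine sum_congr rfl fun u _ => ?_
  rw [kronPow_add (rfl : k + m = k + m), trace_memChan_mul_kronSplit _ _ (Nat.mul_pos hk hl)]
  simp_rw [mul_one, trace_tensChan fun t => hΦ _, trace_kronPow, hρ, one_pow, mul_one]
  exact congrArg _ (sum_chainWt_row_mul_last (Nat.mul_pos hk hl) _
    fun j => (memChan q (q j) Φ (m * l) (kronPow m ρ) * B).trace)

end MarkovChannel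

/-- Strong clustering of the mean output state: expectations of observables with
widely separated supports decouple. -/
theorem mean_output_strongly_clustering {I : Type} [Fintype I] [DecidableEq I] {dH dK : ℕ}
    (q : I → I → ℝ) (γ : I → ℝ) (Φ : I → QChannelMap dH dK)
    (hq : IsStochastic q) (hγ : IsInvariantDist q γ) (hΦ : ∀ i, IsCPTP (Φ i))
    (hirr : IsIrreducibleChain q) (haper : IsAperiodicChain q)
    (l₀ m : ℕ) (hl₀ : 1 ≤ l₀) (hm : 1 ≤ m) (ρbar : MatPow dH l₀) (hρ : IsDensity ρbar)
    (A B : MatPow dK (m * l₀)) :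
    Tendsto (fun k : ℕ =>
        (memChan q γ Φ ((2 * m + k) * l₀) (kronPow (2 * m + k) ρbar) *
          threeBlock m k l₀ A B).trace)
      atTop
      (nhds ((memChan q γ Φ (m * l₀) (kronPow m ρbar) * A).trace *
        (memChan q γ Φ (m * l₀) (kronPow m ρbar) * B).trace)) := by
  have hP : qMatrix q ∈ rowStochastic ℝ I := mem_rowStochastic_iff_sum.2 hq
  have hγP : γ ᵥ* qMatrix q = γ := funext fun j => (hγ.2.2 j).symm
  have hmix : ∀ a j, Tendsto (fun k => (qMatrix q ^ (k * l₀)) a j) atTop (𝓝 (γ j)) := fun a j =>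
    (tendsto_pow_apply hP (eventually_forall_pos_pow_apply hP hirr haper) hγ.2.1 hγP a j).comp
      (tendsto_id.atTop_mul_const' hl₀)
  have hB := sum_mul_trace_memChan_row (q := q) (Φ := Φ) γ (Nat.mul_pos hm hl₀) (kronPow m ρbar) B
  rw [hγP] at hB
  rw [← hB, trace_memChan_mul γ _ A, sum_mul]
  refine Tendsto.congr' ((eventually_ge_atTop 1).mono fun k hk =>
    (trace_memChan_kronPow_mul_threeBlock γ (fun i => (hΦ i).2) hl₀ hm hk hρ.2 A B).symm) ?_
  refine tendsto_finsetSum _ fun u _ => (tendsto_finsetSum _ fun j _ => ?_).const_mul _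
  exact (hmix (u ⟨m * l₀ - 1, by have := Nat.mul_pos hm hl₀; omega⟩) j).ofReal.mul_const _

end
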